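/- If ⟨M₁,M₂⟩ ⇒_E N (a parallel η/SP-expansion from a pair), then for each i ∈ {1,2} there exists Pᵢ such that πᵢN →_R* Pᵢ and Mᵢ ⇒_E Pᵢ. -/

import Mathlib

/-- Untyped lambda terms with pairing and projections, de Bruijn representation
(so terms are automatically identified up to alpha-equivalence). -/
inductive Tm : Type
  | var : Nat → Tm
  | app : Tm → Tm → Tm
  | lam : Tm → Tm
  | pair : Tm → Tm → Tm
  | p1 : Tm → Tm
  | p2 : Tm → Tm

/-- Shift free de Bruijn indices ≥ d up by one. -/
def Tm.lift (d : Nat) : Tm → Tm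
  | .var n => if n < d then .var n else .var (n + 1)
  | .app a b => .app (a.lift d) (b.lift d)
  | .lam a => .lam (a.lift (d + 1))
  | .pair a b => .pair (a.lift d) (b.lift d)
  | .p1 a => .p1 (a.lift d)
  | .p2 a => .p2 (a.lift d)

/-- Capture-avoiding substitution of s for variable k. -/
def Tm.subst : Tm → Nat → Tm → Tm
  | .var n, k, s => if n = k then s else if n < k then .var n else .var (n - 1)
  | .app a b, k, s => .app (a.subst k s) (b.subst k s)
  | .lam a, k, s => .lam (a.subst (k + 1) (s.lift 0))
  | .pair a b, k, s => .pair (a.subst k s) (b.subst k s)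
  | .p1 a, k, s => .p1 (a.subst k s)
  | .p2 a, k, s => .p2 (a.subst k s)

/-- One-step R-reduction: compatible closure of (β), (π₁), (π₂), (δπ), (π₁λ), (π₂λ). -/
inductive StepR : Tm → Tm → Prop
  | beta {M N} : StepR (.app (.lam M) N) (M.subst 0 N)
  | pi1 {M N} : StepR (.p1 (.pair M N)) M
  | pi2 {M N} : StepR (.p2 (.pair M N)) N
  | dpi {M N P} : StepR (.app (.pair M N) P) (.pair (.app M P) (.app N P))
  | pi1lam {M} : StepR (.p1 (.lam M)) (.lam (.p1 M))
  | pi2lam {M} : StepR (.p2 (.lam M)) (.lam (.p2 M))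
  | lam {M M'} : StepR M M' → StepR (.lam M) (.lam M')
  | appL {M M' N} : StepR M M' → StepR (.app M N) (.app M' N)
  | appR {M N N'} : StepR N N' → StepR (.app M N) (.app M N')
  | pairL {M M' N} : StepR M M' → StepR (.pair M N) (.pair M' N)
  | pairR {M N N'} : StepR N N' → StepR (.pair M N) (.pair M N')
  | p1 {M M'} : StepR M M' → StepR (.p1 M) (.p1 M')
  | p2 {M M'} : StepR M M' → StepR (.p2 M) (.p2 M')

/-- Parallel η/SP-expansion. -/
inductive ParE : Tm → Tm → Prop
  | refl {M} : ParE M M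
  | lam {M M'} : ParE M M' → ParE (.lam M) (.lam M')
  | app {M M' N N'} : ParE M M' → ParE N N' → ParE (.app M N) (.app M' N')
  | pair {M M' N N'} : ParE M M' → ParE N N' → ParE (.pair M N) (.pair M' N')
  | p1 {M M'} : ParE M M' → ParE (.p1 M) (.p1 M')
  | p2 {M M'} : ParE M M' → ParE (.p2 M) (.p2 M')
  | eta {M M'} : ParE M M' → ParE M (.lam (.app (M'.lift 0) (.var 0)))
  | sp {M M'} : ParE M M' → ParE M (.pair (.p1 M') (.p2 M'))

/-!
The relevant invariant of an expansion `N` of `⟨M₁, M₂⟩` is that `N` R-reduces either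
to a pair `⟨A, B⟩` or to an abstracted pair `λ⟨A, B⟩`, with `Mᵢ ⇒_E A, B` resp. `Mᵢ ⇒_E λA, λB`.
An SP-expansion of either shape reduces to a pair by (π₁), (π₂), (π₁λ), (π₂λ); an η-expansion of a
pair reduces to an abstracted pair by (δπ), and one of an abstracted pair reduces back to it by (β).
Projecting a term of either shape then gives the required `Pᵢ`.
-/

namespace Tm

theorem lift_lift (N : Tm) {i j : Nat} (hij : i ≤ j) :
    (N.lift i).lift (j + 1) = (N.lift j).lift i := by
  induction N generalizing i j with
  | var n => by_cases hj : n < j <;> by_cases hi : n < i <;> simp [lift, *] <;> omega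
  | lam a ih => simp [lift, ih (Nat.succ_le_succ hij)]
  | _ => simp_all [lift]

theorem lift_subst (M N : Tm) {k d : Nat} (hkd : k ≤ d) :
    (M.subst k N).lift d = (M.lift (d + 1)).subst k (N.lift d) := by
  induction M generalizing N k d with
  | var n =>
    simp only [subst, lift]
    split_ifs <;> simp [subst, lift] <;> split_ifs <;> first | rfl | omega | (congr 1; omega)
  | lam a ih =>
    simp only [subst, lift]
    rw [ih _ (Nat.succ_le_succ hkd), lift_lift N (Nat.zero_le d)]
  | _ => simp_all [subst, lift]

theorem subst_lift_succ_var (Q : Tm) (d : Nat) : (Q.lift (d + 1)).subst d (.var d) = Q := by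
  induction Q generalizing d with
  | var n =>
    simp only [lift]
    split_ifs <;> simp [subst] <;> split_ifs <;> first | rfl | omega | (congr 1; omega)
  | lam a ih => simp [subst, lift, ih]
  | _ => simp_all [subst, lift]

end Tm

infix:50 " →ᵣ* " => Relation.ReflTransGen StepR

namespace StepR

open Relation

theorem lift {a b : Tm} (h : StepR a b) (d : Nat) : StepR (a.lift d) (b.lift d) := by
  induction h generalizing d with
  | @beta M N =>
    simp only [Tm.lift]
    rw [Tm.lift_subst M N (Nat.zero_le d)]
    exact beta
  | lam _ ih => exact lam (ih (d + 1))
  | appL _ ih => exact appL (ih d)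
  | appR _ ih => exact appR (ih d)
  | pairL _ ih => exact pairL (ih d)
  | pairR _ ih => exact pairR (ih d)
  | p1 _ ih => exact p1 (ih d)
  | p2 _ ih => exact p2 (ih d)
  | pi1 => exact pi1
  | pi2 => exact pi2
  | dpi => exact dpi
  | pi1lam => exact pi1lam
  | pi2lam => exact pi2lam

variable {a b c e A B N : Tm}

theorem rtc_map (f : Tm → Tm) (hf : ∀ {a b}, StepR a b → StepR (f a) (f b)) (h : a →ᵣ* b) :
    f a →ᵣ* f b :=
  ReflTransGen.lift f (fun _ _ => hf) _ _ h

theorem rtc_lift (h : a →ᵣ* b) (d : Nat) : a.lift d →ᵣ* b.lift d :=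
  rtc_map (Tm.lift d) (fun h => h.lift d) h

theorem rtc_lam (h : a →ᵣ* b) : .lam a →ᵣ* .lam b := rtc_map _ lam h

theorem rtc_p1 (h : a →ᵣ* b) : .p1 a →ᵣ* .p1 b := rtc_map _ p1 h

theorem rtc_p2 (h : a →ᵣ* b) : .p2 a →ᵣ* .p2 b := rtc_map _ p2 h

theorem rtc_appL (h : a →ᵣ* b) : .app a c →ᵣ* .app b c := rtc_map (Tm.app · c) appL h

theorem rtc_pair (h₁ : a →ᵣ* b) (h₂ : c →ᵣ* e) : .pair a c →ᵣ* .pair b e :=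
  (rtc_map (Tm.pair · c) pairL h₁).trans (rtc_map _ pairR h₂)

theorem rtc_p1_of_rtc_pair (h : N →ᵣ* .pair A B) : .p1 N →ᵣ* A :=
  (rtc_p1 h).tail pi1

theorem rtc_p2_of_rtc_pair (h : N →ᵣ* .pair A B) : .p2 N →ᵣ* B :=
  (rtc_p2 h).tail pi2

theorem rtc_p1_of_rtc_lam_pair (h : N →ᵣ* .lam (.pair A B)) : .p1 N →ᵣ* .lam A :=
  ((rtc_p1 h).tail pi1lam).tail (lam pi1)

theorem rtc_p2_of_rtc_lam_pair (h : N →ᵣ* .lam (.pair A B)) : .p2 N →ᵣ* .lam B :=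
  ((rtc_p2 h).tail pi2lam).tail (lam pi2)

theorem rtc_eta_of_rtc_pair (h : N →ᵣ* .pair A B) :
    .lam (.app (N.lift 0) (.var 0)) →ᵣ*
      .lam (.pair (.app (A.lift 0) (.var 0)) (.app (B.lift 0) (.var 0))) :=
  rtc_lam ((rtc_appL (rtc_lift h 0)).tail dpi)

theorem rtc_eta_of_rtc_lam_pair (h : N →ᵣ* .lam (.pair A B)) :
    .lam (.app (N.lift 0) (.var 0)) →ᵣ* .lam (.pair A B) := by
  have hβ : StepR (.app (.lam (.pair (A.lift 1) (B.lift 1))) (.var 0)) (.pair A B) := by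
    simpa only [Tm.subst, Tm.subst_lift_succ_var] using @beta (.pair (A.lift 1) (B.lift 1)) (.var 0)
  exact rtc_lam ((rtc_appL (rtc_lift h 0)).tail hβ)

end StepR

inductive PairExpansion (M₁ M₂ : Tm) : Tm → Prop
  | pair {N A B} : N →ᵣ* .pair A B → ParE M₁ A → ParE M₂ B → PairExpansion M₁ M₂ N
  | lamPair {N A B} : N →ᵣ* .lam (.pair A B) → ParE M₁ (.lam A) → ParE M₂ (.lam B) →
      PairExpansion M₁ M₂ N

namespace PairExpansion

open StepR

variable {M₁ M₂ N : Tm}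

theorem eta (h : PairExpansion M₁ M₂ N) :
    PairExpansion M₁ M₂ (.lam (.app (N.lift 0) (.var 0))) := by
  cases h with
  | pair hN h₁ h₂ => exact lamPair (rtc_eta_of_rtc_pair hN) h₁.eta h₂.eta
  | lamPair hN h₁ h₂ => exact lamPair (rtc_eta_of_rtc_lam_pair hN) h₁ h₂

theorem sp (h : PairExpansion M₁ M₂ N) : PairExpansion M₁ M₂ (.pair (.p1 N) (.p2 N)) := by
  cases h with
  | pair hN h₁ h₂ => exact pair (rtc_pair (rtc_p1_of_rtc_pair hN) (rtc_p2_of_rtc_pair hN)) h₁ h₂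
  | lamPair hN h₁ h₂ =>
    exact pair (rtc_pair (rtc_p1_of_rtc_lam_pair hN) (rtc_p2_of_rtc_lam_pair hN)) h₁ h₂

theorem of_parE_pair (h : ParE (.pair M₁ M₂) N) : PairExpansion M₁ M₂ N := by
  generalize hM : Tm.pair M₁ M₂ = M at h
  induction h with
  | refl => subst hM; exact pair .refl .refl .refl
  | pair h₁ h₂ => cases hM; exact pair .refl h₁ h₂
  | eta _ ih => exact (ih hM).eta
  | sp _ ih => exact (ih hM).sp
  | _ => cases hM

theorem proj (h : PairExpansion M₁ M₂ N) :
    (∃ P, .p1 N →ᵣ* P ∧ ParE M₁ P) ∧ (∃ P, .p2 N →ᵣ* P ∧ ParE M₂ P) := by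
  cases h with
  | pair hN h₁ h₂ => exact ⟨⟨_, rtc_p1_of_rtc_pair hN, h₁⟩, ⟨_, rtc_p2_of_rtc_pair hN, h₂⟩⟩
  | lamPair hN h₁ h₂ =>
    exact ⟨⟨_, rtc_p1_of_rtc_lam_pair hN, h₁⟩, ⟨_, rtc_p2_of_rtc_lam_pair hN, h₂⟩⟩

end PairExpansion

/-- If ⟨M₁,M₂⟩ ⇒_E N then for each i ∈ {1,2} there is Pᵢ with πᵢN →_R* Pᵢ and Mᵢ ⇒_E Pᵢ. -/
theorem parE_pair_proj (M₁ M₂ N : Tm) (h : ParE (.pair M₁ M₂) N) :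
    (∃ P, Relation.ReflTransGen StepR (.p1 N) P ∧ ParE M₁ P) ∧
    (∃ P, Relation.ReflTransGen StepR (.p2 N) P ∧ ParE M₂ P) :=
  (PairExpansion.of_parE_pair h).proj
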